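/- Let m ≥ 2, let Δ be a flag (2m−1)-dimensional pseudomanifold, and let σ be a facet of Δ. Then for every 1 ≤ k ≤ 2m−3, a_k − b_k = Σ_{j=k+1}^{2m−1} (−1)^{j−k+1} · C(j,k) · a_j, where C(j,k) is the binomial coefficient. -/

import Mathlib

open Finset

variable {V : Type*} [DecidableEq V]

/-- A simplicial complex on (a subset of) the vertex type `V`: a collection of
finite sets (the faces) that contains the empty set and is closed under inclusion. -/
def IsComplex (Δ : Finset (Finset V)) : Prop :=
  ∅ ∈ Δ ∧ ∀ σ ∈ Δ, ∀ τ ⊆ σ, τ ∈ Δ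

/-- The vertex set `V(Δ)` of a complex. -/
def verts (Δ : Finset (Finset V)) : Finset V := Δ.sup id

/-- The link `lk(σ,Δ) = {τ ∈ Δ : τ ∩ σ = ∅ ∧ τ ∪ σ ∈ Δ}`. -/
def link (Δ : Finset (Finset V)) (σ : Finset V) : Finset (Finset V) :=
  Δ.filter fun τ => τ ∩ σ = ∅ ∧ τ ∪ σ ∈ Δ

/-- The induced subcomplex `Δ[W] = {σ ∈ Δ : σ ⊆ W}`. -/
def induced (Δ : Finset (Finset V)) (W : Finset V) : Finset (Finset V) :=
  Δ.filter fun σ => σ ⊆ W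

/-- `fNum Δ i` is the number `f_i(Δ)` of `i`-dimensional faces of `Δ`,
i.e. of faces of cardinality `i + 1`. -/
def fNum (Δ : Finset (Finset V)) (i : ℕ) : ℕ :=
  (Δ.filter fun σ => σ.card = i + 1).card

/-- `Δ` is flag: every set of vertices all of whose two-element subsets are
faces of `Δ` is itself a face of `Δ`.  (Taking `u = v` below, this in particular
requires each member of `S` to be a vertex of `Δ`.) -/
def IsFlag (Δ : Finset (Finset V)) : Prop :=
  ∀ S : Finset V, (∀ u ∈ S, ∀ v ∈ S, ({u, v} : Finset V) ∈ Δ) → S ∈ Δ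

/-- A facet: an inclusion-maximal face. -/
def IsFacet (Δ : Finset (Finset V)) (σ : Finset V) : Prop :=
  σ ∈ Δ ∧ ∀ τ ∈ Δ, σ ⊆ τ → τ = σ

/-- A `(d-1)`-dimensional pseudomanifold: a pure `(d-1)`-dimensional complex
(all facets have cardinality `d`) in which every `(d-2)`-dimensional face
(cardinality `d-1`) is contained in exactly two facets (= faces of cardinality `d`). -/
def IsPseudomanifold (Δ : Finset (Finset V)) (d : ℕ) : Prop :=
  IsComplex Δ ∧ (∀ σ, IsFacet Δ σ → σ.card = d) ∧
    ∀ τ ∈ Δ, τ.card = d - 1 → (Δ.filter fun σ => σ.card = d ∧ τ ⊆ σ).card = 2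

/-- The 1-skeleton graph of a complex. -/
def skGraph (Δ : Finset (Finset V)) : SimpleGraph V where
  Adj u v := u ≠ v ∧ ({u, v} : Finset V) ∈ Δ
  symm := ⟨fun u v h => ⟨h.1.symm, by rw [Finset.pair_comm]; exact h.2⟩⟩
  loopless := ⟨fun u h => h.1 rfl⟩

/-- The 1-skeleton graph, restricted to the vertex set of `Δ`, is connected. -/
def ConnOn (Δ : Finset (Finset V)) : Prop :=
  ((skGraph Δ).induce (verts Δ : Set V)).Connected

/-- A normal `(d-1)`-pseudomanifold: the 1-skeleton is connected and the
1-skeleton of the link of each face of dimension at most `d-3`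
(cardinality at most `d-2`) is connected. -/
def IsNormalPseudomanifold (Δ : Finset (Finset V)) (d : ℕ) : Prop :=
  IsPseudomanifold Δ d ∧ ConnOn Δ ∧
    ∀ σ ∈ Δ, σ.card + 2 ≤ d → ConnOn (link Δ σ)

/-- A circle (cycle): a connected 1-dimensional pseudomanifold. -/
def IsCircle (Δ : Finset (Finset V)) : Prop :=
  IsPseudomanifold Δ 2 ∧ ConnOn Δ

/-- The 0-dimensional complex consisting of two disjoint vertices. -/
def IsTwoPoints (P : Finset (Finset V)) : Prop :=
  ∃ a b : V, a ≠ b ∧ P = {∅, {a}, {b}}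

/-- The join of two complexes (on disjoint vertex sets): faces `σ ∪ τ`
with `σ ∈ Δ`, `τ ∈ Γ`. -/
def join (Δ Γ : Finset (Finset V)) : Finset (Finset V) :=
  (Δ ×ˢ Γ).image fun p => p.1 ∪ p.2

/-- `Δ` is the suspension of a circle: the join of a circle with two disjoint points. -/
def IsSuspensionOfCircle (Δ : Finset (Finset V)) : Prop :=
  ∃ C P, IsCircle C ∧ IsTwoPoints P ∧ Disjoint (verts C) (verts P) ∧ Δ = join C P

/-- Iterated join of a family of complexes. -/
def joinFam : (m : ℕ) → (Fin m → Finset (Finset V)) → Finset (Finset V)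
  | 0, _ => {∅}
  | m + 1, C => join (C 0) (joinFam m fun i => C i.succ)

/-- `Δ` is the join of `m` circles (on pairwise disjoint vertex sets). -/
def IsJoinOfCircles (Δ : Finset (Finset V)) (m : ℕ) : Prop :=
  ∃ C : Fin m → Finset (Finset V), (∀ i, IsCircle (C i)) ∧
    (∀ i j, i ≠ j → Disjoint (verts (C i)) (verts (C j))) ∧ Δ = joinFam m C

/-- `a_k = Σ_{τ ⊆ σ, |τ| = k} f₀(lk(τ,Δ))`. -/
def aNum (Δ : Finset (Finset V)) (σ : Finset V) (k : ℕ) : ℕ :=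
  ∑ τ ∈ σ.powersetCard k, fNum (link Δ τ) 0

/-- `W_τ`: the vertices `w` of `lk(τ,Δ)` with `{w,u} ∉ Δ` for every `u ∈ σ \ τ`. -/
def Wset (Δ : Finset (Finset V)) (σ τ : Finset V) : Finset V :=
  (verts (link Δ τ)).filter fun w => ∀ u ∈ σ \ τ, ({w, u} : Finset V) ∉ Δ

/-- `b_k = Σ_{τ ⊆ σ, |τ| = k} |W_τ|`. -/
def bNum (Δ : Finset (Finset V)) (σ : Finset V) (k : ℕ) : ℕ :=
  ∑ τ ∈ σ.powersetCard k, (Wset Δ σ τ).card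

/-- The Euler characteristic `χ(Δ) = Σ_{i ≥ 0} (-1)^i f_i(Δ)`, computed as a sum
of `(-1)^{|σ|-1}` over the nonempty faces `σ`. -/
def eulerChar (Δ : Finset (Finset V)) : ℤ :=
  ∑ σ ∈ Δ.filter (fun σ => σ ≠ ∅), (-1 : ℤ) ^ (σ.card - 1)

/-- `Δ` is Eulerian: for every face `σ` (including `σ = ∅`, whose link is `Δ`),
`χ(lk(σ,Δ)) = 1 + (-1)^{dim lk(σ,Δ)}`; since `dim lk(σ,Δ)` is one less than the
maximal cardinality of a face of the link, this equals `1 - (-1)^{max card}`. -/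
def IsEulerian (Δ : Finset (Finset V)) : Prop :=
  ∀ σ ∈ Δ, eulerChar (link Δ σ) = 1 - (-1) ^ ((link Δ σ).sup Finset.card)

/-! For a vertex `w`, let `N(w)` be the set of its neighbours in `σ`. Flagness makes `w` a vertex
of `lk(τ,Δ)` exactly when `τ ⊆ N(w)`, and a member of `W_τ` exactly when moreover `w ∉ σ` and
`N(w) = τ`. Double counting over the vertices therefore gives `a_j = Σ_w C(|N(w)|, j)` and
`b_k = #{w ∉ σ : |N(w)| = k}`, and the theorem reduces, vertex by vertex, to the binomial identity
`Σ_{j=k}^{n} (-1)^{j-k} C(j,k) C(c,j) = [c = k]` for `c ≤ n`. It applies with `n = |σ| - 1`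
because `σ` is a facet, so no vertex outside `σ` is adjacent to all of `σ`. -/

theorem sum_Icc_neg_one_pow_mul_choose_mul_choose {c k n : ℕ} (hc : c ≤ n) :
    ∑ j ∈ Icc k n, (-1 : ℤ) ^ (j - k) * j.choose k * c.choose j = if c = k then 1 else 0 := by
  rcases lt_or_ge c k with hck | hkc
  · rw [if_neg hck.ne, sum_eq_zero]
    intro j hj
    rw [Nat.choose_eq_zero_of_lt (hck.trans_le (mem_Icc.1 hj).1)]
    simp
  have hvanish : ∀ j ∈ Icc k n, j ∉ Icc k c → (-1 : ℤ) ^ (j - k) * j.choose k * c.choose j = 0 :=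
    fun j hj hjc => by
      rw [Nat.choose_eq_zero_of_lt (n := c) (by simp only [mem_Icc] at hj hjc; omega)]
      simp
  rw [← sum_subset (Icc_subset_Icc_right hc) hvanish, ← Ico_add_one_right_eq_Icc,
    sum_Ico_eq_sum_range]
  calc ∑ i ∈ range (c + 1 - k), (-1 : ℤ) ^ (k + i - k) * (k + i).choose k * c.choose (k + i)
      = c.choose k * ∑ i ∈ range (c - k + 1), (-1 : ℤ) ^ i * (c - k).choose i := by
        rw [mul_sum, show c + 1 - k = c - k + 1 by omega]
        refine sum_congr rfl fun i _ => ?_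
        have h := Nat.choose_mul (n := c) (k := k + i) (s := k) (by omega)
        rw [Nat.add_sub_cancel_left] at h ⊢
        rw [mul_comm (c.choose (k + i)) _] at h
        rw [mul_assoc, ← Nat.cast_mul, h]
        push_cast
        ring
    _ = if c = k then 1 else 0 := by
        rw [Int.alternating_sum_range_choose]
        by_cases h : c = k <;> simp [h, Nat.sub_eq_zero_iff_le, hkc.ge_iff_eq']

theorem choose_sub_ite_eq_sum_Icc {c k n : ℕ} (hc : c ≤ n) :
    (c.choose k : ℤ) - (if c = k then 1 else 0) =
      ∑ j ∈ Icc (k + 1) n, (-1 : ℤ) ^ (j - k + 1) * j.choose k * c.choose j := by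
  rcases lt_or_ge n k with hnk | hkn
  · rw [Icc_eq_empty (by omega), Nat.choose_eq_zero_of_lt (by omega), if_neg (by omega)]
    simp
  rw [← sum_Icc_neg_one_pow_mul_choose_mul_choose hc, ← add_sum_Ioc_eq_sum_Icc hkn,
    ← Icc_add_one_left_eq_Ioc]
  simp only [Nat.sub_self, pow_zero, Nat.choose_self, Nat.cast_one, one_mul,
    sub_add_cancel_left, ← sum_neg_distrib]
  exact sum_congr rfl fun j _ => by ring

section FlagComplex

variable {Δ : Finset (Finset V)} {σ τ : Finset V} {w : V}

lemma mem_verts : w ∈ verts Δ ↔ ∃ ρ ∈ Δ, w ∈ ρ := by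
  simp [verts, Finset.mem_sup]

lemma IsComplex.singleton_mem_iff (hC : IsComplex Δ) : {w} ∈ Δ ↔ w ∈ verts Δ :=
  ⟨fun h => mem_verts.2 ⟨_, h, mem_singleton_self w⟩,
    fun h => by
      obtain ⟨ρ, hρ, hw⟩ := mem_verts.1 h
      exact hC.2 ρ hρ _ (singleton_subset_iff.2 hw)⟩

lemma IsComplex.link (hC : IsComplex Δ) (hτ : τ ∈ Δ) : IsComplex (link Δ τ) := by
  refine ⟨mem_filter.2 ⟨hC.1, empty_inter τ, by simpa using hτ⟩, fun ρ hρ ρ' hρ' => ?_⟩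
  obtain ⟨hρΔ, hdisj, hunion⟩ := mem_filter.1 hρ
  refine mem_filter.2 ⟨hC.2 ρ hρΔ ρ' hρ', ?_, hC.2 _ hunion _ (union_subset_union hρ' le_rfl)⟩
  exact subset_empty.1 (hdisj ▸ inter_subset_inter_right hρ')

lemma IsComplex.fNum_zero (hC : IsComplex Δ) : fNum Δ 0 = (verts Δ).card := by
  have : Δ.filter (fun ρ => ρ.card = 0 + 1) = (verts Δ).map ⟨_, singleton_injective⟩ := by
    ext ρ
    simp only [mem_filter, zero_add, card_eq_one, mem_map, Function.Embedding.coeFn_mk]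
    constructor
    · rintro ⟨hρ, w, rfl⟩
      exact ⟨w, hC.singleton_mem_iff.1 hρ, rfl⟩
    · rintro ⟨w, hw, rfl⟩
      exact ⟨hC.singleton_mem_iff.2 hw, w, rfl⟩
  rw [fNum, this, card_map]

lemma IsFlag.insert_mem (hC : IsComplex Δ) (hF : IsFlag Δ) (hτ : τ ∈ Δ) (hw : {w} ∈ Δ)
    (hwτ : ∀ u ∈ τ, ({w, u} : Finset V) ∈ Δ) : insert w τ ∈ Δ := by
  have hw' : ∀ u ∈ insert w τ, ({w, u} : Finset V) ∈ Δ := by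
    intro u hu
    rcases mem_insert.1 hu with rfl | hu
    · simpa using hw
    · exact hwτ u hu
  refine hF _ fun u hu v hv => ?_
  rcases mem_insert.1 hu with rfl | hu'
  · exact hw' v hv
  rcases mem_insert.1 hv with rfl | hv'
  · rw [pair_comm]
    exact hw' u hu
  · exact hC.2 τ hτ _ (insert_subset hu' (singleton_subset_iff.2 hv'))

lemma IsFlag.mem_verts_link_iff (hC : IsComplex Δ) (hF : IsFlag Δ) (hτ : τ ∈ Δ) :
    w ∈ verts (link Δ τ) ↔ w ∈ verts Δ ∧ ∀ u ∈ τ, (skGraph Δ).Adj w u := by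
  constructor
  · intro hw
    obtain ⟨ρ, hρ, hwρ⟩ := mem_verts.1 hw
    obtain ⟨hρΔ, hdisj, hunion⟩ := mem_filter.1 hρ
    refine ⟨mem_verts.2 ⟨ρ, hρΔ, hwρ⟩, fun u hu => ⟨?_, ?_⟩⟩
    · rintro rfl
      simpa [hdisj] using mem_inter.2 ⟨hwρ, hu⟩
    · exact hC.2 _ hunion _ (insert_subset (mem_union_left _ hwρ)
        (singleton_subset_iff.2 (mem_union_right _ hu)))
  · rintro ⟨hw, hadj⟩
    have hwτ : w ∉ τ := fun h => (hadj w h).1 rfl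
    rw [← (hC.link hτ).singleton_mem_iff]
    refine mem_filter.2 ⟨hC.singleton_mem_iff.2 hw, singleton_inter_of_notMem hwτ, ?_⟩
    rw [singleton_union]
    exact hF.insert_mem hC hτ (hC.singleton_mem_iff.2 hw) fun u hu => (hadj u hu).2

instance (Δ : Finset (Finset V)) : DecidableRel (skGraph Δ).Adj :=
  fun u v => inferInstanceAs (Decidable (u ≠ v ∧ ({u, v} : Finset V) ∈ Δ))

def neighborsIn (Δ : Finset (Finset V)) (σ : Finset V) (w : V) : Finset V :=
  {u ∈ σ | (skGraph Δ).Adj w u}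

lemma neighborsIn_subset : neighborsIn Δ σ w ⊆ σ := filter_subset _ _

lemma IsComplex.neighborsIn_eq_erase (hC : IsComplex Δ) (hσ : σ ∈ Δ) (hw : w ∈ σ) :
    neighborsIn Δ σ w = σ.erase w := by
  ext u
  simp only [neighborsIn, mem_filter, mem_erase]
  exact ⟨fun ⟨hu, hne, _⟩ => ⟨hne.symm, hu⟩,
    fun ⟨hne, hu⟩ => ⟨hu, hne.symm, hC.2 σ hσ _ (insert_subset hw (singleton_subset_iff.2 hu))⟩⟩

lemma IsFlag.card_neighborsIn_lt (hC : IsComplex Δ) (hF : IsFlag Δ) (hσ : IsFacet Δ σ)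
    (hw : w ∈ verts Δ) (hwσ : w ∉ σ) : (neighborsIn Δ σ w).card < σ.card := by
  refine card_lt_card ⟨neighborsIn_subset, fun hσN => hwσ ?_⟩
  have hins : insert w σ ∈ Δ := hF.insert_mem hC hσ.1 (hC.singleton_mem_iff.2 hw)
    fun u hu => ((mem_filter.1 (hσN hu)).2).2
  exact hσ.2 _ hins (subset_insert w σ) ▸ mem_insert_self w σ

lemma IsFlag.mem_verts_link_iff_subset (hC : IsComplex Δ) (hF : IsFlag Δ) (hσ : σ ∈ Δ)
    (hτσ : τ ⊆ σ) : w ∈ verts (link Δ τ) ↔ w ∈ verts Δ ∧ τ ⊆ neighborsIn Δ σ w := by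
  rw [hF.mem_verts_link_iff hC (hC.2 σ hσ τ hτσ)]
  refine and_congr_right fun _ => ⟨fun h u hu => mem_filter.2 ⟨hτσ hu, h u hu⟩,
    fun h u hu => (mem_filter.1 (h hu)).2⟩

lemma IsFlag.mem_Wset_iff (hC : IsComplex Δ) (hF : IsFlag Δ) (hσ : σ ∈ Δ) (hτσ : τ ⊆ σ) :
    w ∈ Wset Δ σ τ ↔ w ∈ verts Δ ∧ w ∉ σ ∧ neighborsIn Δ σ w = τ := by
  rw [Wset, mem_filter, hF.mem_verts_link_iff_subset hC hσ hτσ]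
  constructor
  · rintro ⟨⟨hw, hτN⟩, hW⟩
    have hwσ : w ∉ σ := fun hwσ => by
      have hwτ : w ∉ τ := fun h => (mem_filter.1 (hτN h)).2.1 rfl
      exact hW w (mem_sdiff.2 ⟨hwσ, hwτ⟩) (by simpa using hC.singleton_mem_iff.2 hw)
    refine ⟨hw, hwσ, Subset.antisymm (fun u hu => ?_) hτN⟩
    obtain ⟨huσ, -, hwu⟩ := mem_filter.1 hu
    by_contra huτ
    exact hW u (mem_sdiff.2 ⟨huσ, huτ⟩) hwu
  · rintro ⟨hw, hwσ, rfl⟩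
    refine ⟨⟨hw, Subset.rfl⟩, fun u hu hwu => ?_⟩
    obtain ⟨huσ, huN⟩ := mem_sdiff.1 hu
    refine huN (mem_filter.2 ⟨huσ, ?_, hwu⟩)
    rintro rfl
    exact hwσ huσ

lemma IsFlag.aNum_eq_sum_choose (hC : IsComplex Δ) (hF : IsFlag Δ) (hσ : σ ∈ Δ) (j : ℕ) :
    aNum Δ σ j = ∑ w ∈ verts Δ, (neighborsIn Δ σ w).card.choose j := by
  let r : Finset V → V → Prop := fun τ w => τ ⊆ neighborsIn Δ σ w
  calc aNum Δ σ j = ∑ τ ∈ σ.powersetCard j, ((verts Δ).bipartiteAbove r τ).card := by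
        refine sum_congr rfl fun τ hτ => ?_
        have hτσ := (mem_powersetCard.1 hτ).1
        rw [(hC.link (hC.2 σ hσ τ hτσ)).fNum_zero]
        congr 1
        ext w
        rw [bipartiteAbove, mem_filter, hF.mem_verts_link_iff_subset hC hσ hτσ]
    _ = ∑ w ∈ verts Δ, ((σ.powersetCard j).bipartiteBelow r w).card :=
        sum_card_bipartiteAbove_eq_sum_card_bipartiteBelow r
    _ = ∑ w ∈ verts Δ, (neighborsIn Δ σ w).card.choose j := by
        refine sum_congr rfl fun w _ => ?_
        rw [bipartiteBelow, ← card_powersetCard]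
        congr 1
        ext τ
        simp only [mem_filter, mem_powersetCard, r]
        exact ⟨fun ⟨⟨_, hj⟩, hτN⟩ => ⟨hτN, hj⟩,
          fun ⟨hτN, hj⟩ => ⟨⟨hτN.trans neighborsIn_subset, hj⟩, hτN⟩⟩

lemma IsFlag.bNum_eq_card (hC : IsComplex Δ) (hF : IsFlag Δ) (hσ : σ ∈ Δ) (k : ℕ) :
    bNum Δ σ k = ({w ∈ verts Δ | w ∉ σ ∧ (neighborsIn Δ σ w).card = k} : Finset V).card := by
  rw [card_eq_sum_card_fiberwise (f := neighborsIn Δ σ) (t := σ.powersetCard k)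
    fun w hw => mem_powersetCard.2 ⟨neighborsIn_subset, (mem_filter.1 hw).2.2⟩]
  refine sum_congr rfl fun τ hτ => congr_arg card ?_
  ext w
  rw [mem_filter, mem_filter, hF.mem_Wset_iff hC hσ (mem_powersetCard.1 hτ).1]
  constructor
  · rintro ⟨hw, hwσ, rfl⟩
    exact ⟨⟨hw, hwσ, (mem_powersetCard.1 hτ).2⟩, rfl⟩
  · rintro ⟨⟨hw, hwσ, -⟩, rfl⟩
    exact ⟨hw, hwσ, rfl⟩

theorem IsFlag.aNum_sub_bNum (hC : IsComplex Δ) (hF : IsFlag Δ) (hσ : IsFacet Δ σ) {k : ℕ}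
    (hk : k + 1 ≠ σ.card) :
    (aNum Δ σ k : ℤ) - bNum Δ σ k =
      ∑ j ∈ Icc (k + 1) (σ.card - 1), (-1 : ℤ) ^ (j - k + 1) * j.choose k * aNum Δ σ j := by
  have hvertex : ∀ w ∈ verts Δ,
      ((neighborsIn Δ σ w).card.choose k : ℤ) -
          (if w ∉ σ ∧ (neighborsIn Δ σ w).card = k then 1 else 0) =
        ∑ j ∈ Icc (k + 1) (σ.card - 1),
          (-1 : ℤ) ^ (j - k + 1) * j.choose k * (neighborsIn Δ σ w).card.choose j := by
    intro w hw
    by_cases hwσ : w ∈ σ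
    · have hcard : (neighborsIn Δ σ w).card = σ.card - 1 := by
        rw [hC.neighborsIn_eq_erase hσ.1 hwσ, card_erase_of_mem hwσ]
      have hpos := card_pos.2 ⟨w, hwσ⟩
      rw [if_neg fun h => h.1 hwσ, ← choose_sub_ite_eq_sum_Icc hcard.le, if_neg (by omega)]
    · have hlt := hF.card_neighborsIn_lt hC hσ hw hwσ
      simpa [hwσ] using choose_sub_ite_eq_sum_Icc (k := k) (show _ ≤ σ.card - 1 by omega)
  rw [hF.aNum_eq_sum_choose hC hσ.1, hF.bNum_eq_card hC hσ.1, card_filter]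
  push_cast
  rw [← sum_sub_distrib, sum_congr rfl hvertex, sum_comm]
  refine sum_congr rfl fun j _ => ?_
  rw [hF.aNum_eq_sum_choose hC hσ.1, Nat.cast_sum, mul_sum]

end FlagComplex

theorem inclusion_exclusion_a_b_general (m : ℕ) (Δ : Finset (Finset V))
    (hF : IsFlag Δ) (hP : IsPseudomanifold Δ (2 * m)) (σ : Finset V)
    (hσ : IsFacet Δ σ) (k : ℕ) (hk2 : k ≤ 2 * m - 3) :
    (aNum Δ σ k : ℤ) - bNum Δ σ k =
      ∑ j ∈ Finset.Icc (k + 1) (2 * m - 1),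
        (-1 : ℤ) ^ (j - k + 1) * (j.choose k) * aNum Δ σ j := by
  have hcard : σ.card = 2 * m := hP.2.1 σ hσ
  rw [← hcard]
  exact hF.aNum_sub_bNum hP.1 hσ (by omega)

/-- Let `m ≥ 2`, let `Δ` be a flag `(2m-1)`-dimensional
pseudomanifold and `σ` a facet.  For every `1 ≤ k ≤ 2m - 3`:
`a_k - b_k = Σ_{j=k+1}^{2m-1} (-1)^{j-k+1} C(j,k) a_j`. -/
theorem inclusion_exclusion_a_b (m : ℕ) (hm : 2 ≤ m) (Δ : Finset (Finset V))
    (hF : IsFlag Δ) (hP : IsPseudomanifold Δ (2 * m)) (σ : Finset V)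
    (hσ : IsFacet Δ σ) (k : ℕ) (hk1 : 1 ≤ k) (hk2 : k ≤ 2 * m - 3) :
    (aNum Δ σ k : ℤ) - bNum Δ σ k =
      ∑ j ∈ Finset.Icc (k + 1) (2 * m - 1),
        (-1 : ℤ) ^ (j - k + 1) * (j.choose k) * aNum Δ σ j :=
  inclusion_exclusion_a_b_general m Δ hF hP σ hσ k hk2
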